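/- arXiv:2506.10506 — 2 statements merged into one kernel-verified Lean document; each statement's English description precedes it below -/
import Mathlib

section
/- Let X, P : I → ℝ^d be differentiable curves on an open interval I, β : I → ℝ^d an arbitrary (gauge) curve, and φ : I × ℝ^d → ℝ a smooth function such that for all t ∈ I: (i) the constraint ∇_x φ(t, X_t) = P_t holds; (ii) Ẋ_t = b(X_t) − G(X_t) R G(X_t)ᵀ P_t − β_t; (iii) −Ṗ_t = (Db(X_t))ᵀ P_t − ½ ∇_x[‖R G(x)ᵀ P_t‖_R²]_{x=X_t} (gradient taken with P_t frozen) + ∇c(X_t) + D²_x φ(t, X_t) β_t + ½ ∇_x(Σ : D²_x φ)(t, X_t). Then for every t ∈ I, the time-partial derivative of ∇_x φ along the trajectory satisfies −∂_t ∇_x φ(t, X_t) = D²_x φ(t, X_t) b(X_t) + (Db(X_t))ᵀ ∇_x φ(t, X_t) + ∇c(X_t) + ½ ∇_x(Σ : D²_x φ)(t, X_t) − ½ ∇_x[‖R G(x)ᵀ ∇_x φ(t, x)‖_R²]_{x=X_t} (full gradient in x); in particular this evolution equation for ∇_x φ along the trajectory is independent of the gauge β. -/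
open Matrix Set

noncomputable section

/-- Gradient of a scalar function on `ℝ^d`. -/
def grad {d : ℕ} (f : (Fin d → ℝ) → ℝ) (x : Fin d → ℝ) : Fin d → ℝ :=
  fun i => fderiv ℝ f x (Pi.single i 1)

/-- Hessian matrix of a scalar function on `ℝ^d`. -/
def hess {d : ℕ} (f : (Fin d → ℝ) → ℝ) (x : Fin d → ℝ) : Matrix (Fin d) (Fin d) ℝ :=
  fun i j => fderiv ℝ (fun y => grad f y j) x (Pi.single i 1)

/-- Jacobian matrix of a vector field on `ℝ^d`. -/
def jac {d : ℕ} (F : (Fin d → ℝ) → (Fin d → ℝ)) (x : Fin d → ℝ) :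
    Matrix (Fin d) (Fin d) ℝ :=
  fun i j => fderiv ℝ (fun y => F y i) x (Pi.single j 1)

/-- Frobenius pairing `Σ : A = ∑_{ij} Σ_{ij} A_{ij}`. -/
def frob {d : ℕ} (S A : Matrix (Fin d) (Fin d) ℝ) : ℝ := ∑ i, ∑ j, S i j * A i j

/-- Weighted norm squared `‖u‖_R² = uᵀ R⁻¹ u`. -/
def wnorm2 {du : ℕ} (R : Matrix (Fin du) (Fin du) ℝ) (u : Fin du → ℝ) : ℝ :=
  u ⬝ᵥ (R⁻¹ *ᵥ u)

/-! ### Auxiliary lemmas -/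


lemma fderiv_slice {d : ℕ} {F : ℝ × (Fin d → ℝ) → ℝ} (hF : ContDiff ℝ (⊤ : ℕ∞) F)
    (t : ℝ) (x v : Fin d → ℝ) :
    fderiv ℝ (fun y => F (t, y)) x v = fderiv ℝ F (t, x) (0, v) := by
  have h := (hF.differentiable (by simp) (t, x)).hasFDerivAt
  have h2 := h.comp x (hasFDerivAt_prodMk_right t x)
  rw [show (fun y => F (t, y)) = F ∘ Prod.mk t from rfl, h2.fderiv]
  simp

lemma pi_sum_single {d : ℕ} (v : Fin d → ℝ) :
    v = ∑ j, v j • (Pi.single j 1 : Fin d → ℝ) := by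
  funext k
  simp [Pi.single_apply, Finset.sum_ite_eq', mul_comm]

lemma hess_symm {d : ℕ} {f : (Fin d → ℝ) → ℝ} (hf : ContDiff ℝ (⊤ : ℕ∞) f)
    (x : Fin d → ℝ) (i j : Fin d) : hess f x i j = hess f x j i := by
  have hf' : ContDiff ℝ (⊤ : ℕ∞) (fun y => fderiv ℝ f y) :=
    hf.fderiv_right (by exact_mod_cast le_top)
  have hder : ∀ y, HasFDerivAt f (fderiv ℝ f y) y :=
    fun y => (hf.differentiable (by simp) y).hasFDerivAt
  have h2 : HasFDerivAt (fun y => fderiv ℝ f y) (fderiv ℝ (fun y => fderiv ℝ f y) x) x :=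
    (hf'.differentiable (by simp) x).hasFDerivAt
  have key : ∀ a b : Fin d, hess f x a b
      = fderiv ℝ (fun y => fderiv ℝ f y) x (Pi.single a 1) (Pi.single b 1) := by
    intro a b
    have h3 := (ContinuousLinearMap.apply ℝ ℝ (Pi.single b 1)).hasFDerivAt.comp x h2
    have heq : hess f x a b = fderiv ℝ
        (⇑(ContinuousLinearMap.apply ℝ ℝ (Pi.single b 1)) ∘ fun y => fderiv ℝ f y)
        x (Pi.single a 1) := rfl
    rw [heq, h3.fderiv]
    rfl
  rw [key i j, key j i,
    second_derivative_symmetric hder h2 (Pi.single j 1) (Pi.single i 1)]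

lemma wnorm2_eq {d du : ℕ} {R : Matrix (Fin du) (Fin du) ℝ} (hRpd : R.PosDef)
    (Gx : Matrix (Fin d) (Fin du) ℝ) (u : Fin d → ℝ) :
    wnorm2 R ((R * Gxᵀ) *ᵥ u) = u ⬝ᵥ ((Gx * R * Gxᵀ) *ᵥ u) := by
  unfold wnorm2
  rw [Matrix.mulVec_mulVec, ← Matrix.mul_assoc,
    Matrix.nonsing_inv_mul R hRpd.det_pos.ne'.isUnit, Matrix.one_mul,
    Matrix.mulVec_transpose, dotProduct_comm, ← Matrix.dotProduct_mulVec,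
    Matrix.mulVec_mulVec, ← Matrix.mul_assoc]

lemma fderiv_double_sum_apply {d : ℕ} {f : Fin d → Fin d → (Fin d → ℝ) → ℝ}
    {x v : Fin d → ℝ} (hf : ∀ j k, DifferentiableAt ℝ (f j k) x) :
    fderiv ℝ (fun y => ∑ j, ∑ k, f j k y) x v = ∑ j, ∑ k, fderiv ℝ (f j k) x v := by
  rw [fderiv_fun_sum (fun j _ => DifferentiableAt.fun_sum fun k _ => hf j k),
    ContinuousLinearMap.sum_apply]
  exact Finset.sum_congr rfl fun j _ => by
    rw [fderiv_fun_sum (fun k _ => hf j k), ContinuousLinearMap.sum_apply]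

lemma fderiv_mul3 {d : ℕ} {c a q : (Fin d → ℝ) → ℝ} {x v : Fin d → ℝ}
    (hc : DifferentiableAt ℝ c x) (ha : DifferentiableAt ℝ a x)
    (hq : DifferentiableAt ℝ q x) :
    fderiv ℝ (fun y => c y * (a y * q y)) x v
      = c x * (a x * fderiv ℝ q x v + q x * fderiv ℝ a x v)
        + (a x * q x) * fderiv ℝ c x v := by
  rw [fderiv_fun_mul hc (ha.fun_mul hq), ContinuousLinearMap.add_apply,
    ContinuousLinearMap.smul_apply, ContinuousLinearMap.smul_apply,
    fderiv_fun_mul ha hq, ContinuousLinearMap.add_apply,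
    ContinuousLinearMap.smul_apply, ContinuousLinearMap.smul_apply]
  simp [smul_eq_mul]

lemma fderiv_cst_mul_cst {d : ℕ} {a : (Fin d → ℝ) → ℝ} {x v : Fin d → ℝ}
    (p r : ℝ) (ha : DifferentiableAt ℝ a x) :
    fderiv ℝ (fun y => p * (a y * r)) x v = p * (r * fderiv ℝ a x v) := by
  rw [fderiv_const_mul (ha.mul_const r), ContinuousLinearMap.smul_apply,
    fderiv_mul_const ha, ContinuousLinearMap.smul_apply]
  simp [smul_eq_mul]

lemma entry_contDiff {d du : ℕ} (R : Matrix (Fin du) (Fin du) ℝ)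
    {G : (Fin d → ℝ) → Matrix (Fin d) (Fin du) ℝ}
    (hG : ∀ i j, ContDiff ℝ (⊤ : ℕ∞) fun x => G x i j) (j k : Fin d) :
    ContDiff ℝ (⊤ : ℕ∞) (fun x => (G x * R * (G x)ᵀ) j k) := by
  simp only [Matrix.mul_apply, Matrix.transpose_apply]
  exact ContDiff.sum fun m _ =>
    (ContDiff.sum fun l _ => (hG j l).mul contDiff_const).mul (hG k m)

lemma entry_symm {d du : ℕ} {R : Matrix (Fin du) (Fin du) ℝ} (hRsymm : R.IsSymm)
    (Gx : Matrix (Fin d) (Fin du) ℝ) (j k : Fin d) :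
    (Gx * R * Gxᵀ) j k = (Gx * R * Gxᵀ) k j := by
  have h : (Gx * R * Gxᵀ)ᵀ = Gx * R * Gxᵀ := by
    rw [Matrix.transpose_mul, Matrix.transpose_mul, Matrix.transpose_transpose,
      hRsymm.eq, Matrix.mul_assoc]
  conv_lhs => rw [← h]
  rfl

/-- Theorem 1 of the paper, pointwise form.
Along a mean-field Pontryagin trajectory `(X, P)` with arbitrary gauge `β` and a
multiplier function `φ` satisfying the constraint `∇ₓφ(t, Xₜ) = Pₜ`, the time-partial
derivative of `∇ₓφ` along the trajectory satisfies an evolution equation that is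
independent of the gauge `β`. -/
theorem stmt0 {d du : ℕ}
    (R : Matrix (Fin du) (Fin du) ℝ) (hRsymm : R.IsSymm) (hRpd : R.PosDef)
    (Sig : Matrix (Fin d) (Fin d) ℝ) (hSig : Sig.IsSymm)
    (b : (Fin d → ℝ) → (Fin d → ℝ)) (hb : ContDiff ℝ (⊤ : ℕ∞) b)
    (G : (Fin d → ℝ) → Matrix (Fin d) (Fin du) ℝ)
    (hG : ∀ i j, ContDiff ℝ (⊤ : ℕ∞) fun x => G x i j)
    (c : (Fin d → ℝ) → ℝ) (hc : ContDiff ℝ (⊤ : ℕ∞) c)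
    (I : Set ℝ) (hI : IsOpen I) (hIconn : I.OrdConnected)
    (X P β : ℝ → (Fin d → ℝ))
    (φ : ℝ → (Fin d → ℝ) → ℝ)
    (hφ : ContDiff ℝ (⊤ : ℕ∞) fun q : ℝ × (Fin d → ℝ) => φ q.1 q.2)
    -- (i) the constraint ∇ₓφ(t, Xₜ) = Pₜ
    (hconstraint : ∀ t ∈ I, grad (φ t) (X t) = P t)
    -- (ii) Ẋₜ = b(Xₜ) − G(Xₜ) R G(Xₜ)ᵀ Pₜ − βₜ
    (hX : ∀ t ∈ I, HasDerivAt X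
      (b (X t) - (G (X t) * R * (G (X t))ᵀ) *ᵥ P t - β t) t)
    -- (iii) −Ṗₜ = (Db)ᵀPₜ − ½∇ₓ‖RGᵀPₜ‖_R² (Pₜ frozen) + ∇c + D²ₓφ βₜ + ½∇ₓ(Σ : D²ₓφ)
    (hP : ∀ t ∈ I, HasDerivAt P
      (-((jac b (X t))ᵀ *ᵥ P t
          - (1/2 : ℝ) • grad (fun x => wnorm2 R ((R * (G x)ᵀ) *ᵥ P t)) (X t)
          + grad c (X t)
          + (hess (φ t) (X t)) *ᵥ β t
          + (1/2 : ℝ) • grad (fun x => frob Sig (hess (φ t) x)) (X t))) t) :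
    -- conclusion: −∂ₜ∇ₓφ(t, Xₜ) = D²ₓφ b + (Db)ᵀ∇ₓφ + ∇c + ½∇ₓ(Σ : D²ₓφ)
    --             − ½∇ₓ‖RG(x)ᵀ∇ₓφ(t,x)‖_R² (full gradient in x), independent of β
    ∀ t ∈ I,
      (fun i => -deriv (fun s => grad (φ s) (X t) i) t)
        = (hess (φ t) (X t)) *ᵥ b (X t)
          + (jac b (X t))ᵀ *ᵥ grad (φ t) (X t)
          + grad c (X t)
          + (1/2 : ℝ) • grad (fun x => frob Sig (hess (φ t) x)) (X t)
          - (1/2 : ℝ) • grad (fun x => wnorm2 R ((R * (G x)ᵀ) *ᵥ grad (φ t) x)) (X t) := by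
  intro t ht
  -- notation
  set g : Fin d → ℝ × (Fin d → ℝ) → ℝ :=
    fun i q => fderiv ℝ (fun q' : ℝ × (Fin d → ℝ) => φ q'.1 q'.2) q (0, Pi.single i 1) with hgdef
  have hg : ∀ i, ContDiff ℝ (⊤ : ℕ∞) (g i) := fun i =>
    (hφ.fderiv_right (by exact_mod_cast le_top)).clm_apply contDiff_const
  have hgrad_slice : ∀ (s : ℝ) (y : Fin d → ℝ) (i : Fin d), grad (φ s) y i = g i (s, y) :=
    fun s y i => fderiv_slice hφ s y (Pi.single i 1)
  have hφt : ∀ s : ℝ, ContDiff ℝ (⊤ : ℕ∞) (φ s) := fun s =>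
    hφ.comp (contDiff_const.prodMk contDiff_id)
  have hq : ∀ (s : ℝ) (j : Fin d), ContDiff ℝ (⊤ : ℕ∞) (fun y => grad (φ s) y j) := by
    intro s j
    have he : (fun y => grad (φ s) y j) = fun y => g j (s, y) :=
      funext fun y => hgrad_slice s y j
    rw [he]
    exact (hg j).comp (contDiff_const.prodMk contDiff_id)
  -- abbreviations
  set H := hess (φ t) (X t) with hHdef
  set p := P t with hpdef
  set A : (Fin d → ℝ) → Matrix (Fin d) (Fin d) ℝ := fun x => G x * R * (G x)ᵀ with hAdef
  set Xd := b (X t) - A (X t) *ᵥ p - β t with hXddef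
  set Pd := -((jac b (X t))ᵀ *ᵥ p
          - (1/2 : ℝ) • grad (fun x => wnorm2 R ((R * (G x)ᵀ) *ᵥ p)) (X t)
          + grad c (X t)
          + H *ᵥ β t
          + (1/2 : ℝ) • grad (fun x => frob Sig (hess (φ t) x)) (X t)) with hPddef
  have hXt : HasDerivAt X Xd t := hX t ht
  have hPt : HasDerivAt P Pd t := hP t ht
  -- the time-derivative identity
  have hcurve : HasDerivAt (fun s => (s, X s)) ((1 : ℝ), Xd) t :=
    (hasDerivAt_id t).prodMk hXt
  have hcurve2 : HasDerivAt (fun s => (s, X t)) ((1 : ℝ), (0 : Fin d → ℝ)) t :=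
    (hasDerivAt_id t).prodMk (hasDerivAt_const t (X t))
  have hgl : ∀ i, HasDerivAt (fun s => g i (s, X s)) (fderiv ℝ (g i) (t, X t) (1, Xd)) t :=
    fun i => (((hg i).differentiable (by simp)) (t, X t)).hasFDerivAt.comp_hasDerivAt (l := g i) t hcurve
  have hev : ∀ i, (fun s => g i (s, X s)) =ᶠ[nhds t] (fun s => P s i) := by
    intro i
    filter_upwards [hI.mem_nhds ht] with s hs
    rw [← hgrad_slice s (X s) i, hconstraint s hs]
  have hPdi : ∀ i, HasDerivAt (fun s => P s i) (fderiv ℝ (g i) (t, X t) (1, Xd)) t :=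
    fun i => (hgl i).congr_of_eventuallyEq (hev i).symm
  have hPcomp : ∀ i, HasDerivAt (fun s => P s i) (Pd i) t := fun i =>
    (ContinuousLinearMap.proj (R := ℝ) (φ := fun _ : Fin d => ℝ) i).hasFDerivAt.comp_hasDerivAt t hPt
  have huniq : ∀ i, fderiv ℝ (g i) (t, X t) (1, Xd) = Pd i :=
    fun i => (hPdi i).unique (hPcomp i)
  have hLHS : ∀ i, deriv (fun s => grad (φ s) (X t) i) t = fderiv ℝ (g i) (t, X t) (1, 0) := by
    intro i
    have h1 : (fun s => grad (φ s) (X t) i) = fun s => g i (s, X t) :=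
      funext fun s => hgrad_slice s (X t) i
    rw [h1]
    exact ((((hg i).differentiable (by simp)) (t, X t)).hasFDerivAt.comp_hasDerivAt t hcurve2).deriv
  have hsplit : ∀ i, fderiv ℝ (g i) (t, X t) ((1 : ℝ), Xd)
      = fderiv ℝ (g i) (t, X t) (1, 0) + fderiv ℝ (g i) (t, X t) (0, Xd) := by
    intro i
    rw [← ContinuousLinearMap.map_add]
    congr 1
    simp [Prod.ext_iff]
  have hdirhess : ∀ i j, fderiv ℝ (g i) (t, X t) ((0 : ℝ), Pi.single j 1) = H j i := by
    intro i j
    rw [← fderiv_slice (hg i) t (X t) (Pi.single j 1)]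
    rw [show (fun y => g i (t, y)) = fun y => grad (φ t) y i from
      funext fun y => (hgrad_slice t y i).symm]
    rfl
  have hdir : ∀ i, fderiv ℝ (g i) (t, X t) ((0 : ℝ), Xd) = ∑ j, Xd j * H j i := by
    intro i
    have h0 : ((0 : ℝ), Xd) = ∑ j, Xd j • ((0 : ℝ), (Pi.single j 1 : Fin d → ℝ)) := by
      have h1 := pi_sum_single Xd
      refine Prod.ext ?_ ?_
      · simp [Prod.fst_sum]
      · simpa [Prod.snd_sum] using h1
    rw [h0, map_sum]
    refine Finset.sum_congr rfl fun j _ => ?_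
    rw [ContinuousLinearMap.map_smul, hdirhess i j]
    simp
  have hsym : ∀ i j, H i j = H j i := fun i j => hess_symm (hφt t) (X t) i j
  have hDt : ∀ i, deriv (fun s => grad (φ s) (X t) i) t = Pd i - (H *ᵥ Xd) i := by
    intro i
    rw [hLHS i, eq_sub_iff_add_eq, ← huniq i, hsplit i, hdir i]
    congr 1
    rw [show (H *ᵥ Xd) i = ∑ j, H i j * Xd j from rfl]
    exact Finset.sum_congr rfl fun j _ => by rw [hsym i j, mul_comm]
  -- the gradient identity
  have hAc : ∀ j k, ContDiff ℝ (⊤ : ℕ∞) (fun x => A x j k) := fun j k =>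
    entry_contDiff R hG j k
  have hAs : ∀ j k, A (X t) j k = A (X t) k j := fun j k => entry_symm hRsymm (G (X t)) j k
  have hwfull : (fun x => wnorm2 R ((R * (G x)ᵀ) *ᵥ grad (φ t) x))
      = fun x => ∑ j, ∑ k, grad (φ t) x j * (A x j k * grad (φ t) x k) := by
    funext x
    rw [wnorm2_eq hRpd (G x) (grad (φ t) x)]
    simp [dotProduct, Matrix.mulVec, Finset.mul_sum, hAdef]
  have hwfrz : (fun x => wnorm2 R ((R * (G x)ᵀ) *ᵥ p))
      = fun x => ∑ j, ∑ k, p j * (A x j k * p k) := by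
    funext x
    rw [wnorm2_eq hRpd (G x) p]
    simp [dotProduct, Matrix.mulVec, Finset.mul_sum, hAdef]
  have hconstr : grad (φ t) (X t) = p := hconstraint t ht
  have hHik : ∀ i k, fderiv ℝ (fun y => grad (φ t) y k) (X t) (Pi.single i 1) = H i k :=
    fun i k => rfl
  have hgradfull : ∀ i, grad (fun x => wnorm2 R ((R * (G x)ᵀ) *ᵥ grad (φ t) x)) (X t) i
      = ∑ j, ∑ k, (p j * (A (X t) j k * H i k + p k
            * fderiv ℝ (fun x => A x j k) (X t) (Pi.single i 1))
          + (A (X t) j k * p k) * H i j) := by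
    intro i
    rw [show grad (fun x => wnorm2 R ((R * (G x)ᵀ) *ᵥ grad (φ t) x)) (X t) i
        = fderiv ℝ (fun x => wnorm2 R ((R * (G x)ᵀ) *ᵥ grad (φ t) x)) (X t) (Pi.single i 1)
        from rfl, hwfull]
    rw [fderiv_double_sum_apply (fun j k =>
      (((hq t j).differentiable (by simp)) (X t)).fun_mul
        ((((hAc j k).differentiable (by simp)) (X t)).fun_mul
          (((hq t k).differentiable (by simp)) (X t))))]
    refine Finset.sum_congr rfl fun j _ => Finset.sum_congr rfl fun k _ => ?_
    rw [fderiv_mul3 (((hq t j).differentiable (by simp)) (X t))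
      (((hAc j k).differentiable (by simp)) (X t))
      (((hq t k).differentiable (by simp)) (X t))]
    rw [hHik i k, hHik i j]
    rw [show grad (φ t) (X t) j = p j from by rw [hconstr],
      show grad (φ t) (X t) k = p k from by rw [hconstr]]
  have hgradfrz : ∀ i, grad (fun x => wnorm2 R ((R * (G x)ᵀ) *ᵥ p)) (X t) i
      = ∑ j, ∑ k, p j * (p k * fderiv ℝ (fun x => A x j k) (X t) (Pi.single i 1)) := by
    intro i
    rw [show grad (fun x => wnorm2 R ((R * (G x)ᵀ) *ᵥ p)) (X t) i
        = fderiv ℝ (fun x => wnorm2 R ((R * (G x)ᵀ) *ᵥ p)) (X t) (Pi.single i 1)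
        from rfl, hwfrz]
    rw [fderiv_double_sum_apply (fun j k => (differentiableAt_const (p j)).fun_mul
      ((((hAc j k).differentiable (by simp)) (X t)).fun_mul
        (differentiableAt_const (p k))))]
    refine Finset.sum_congr rfl fun j _ => Finset.sum_congr rfl fun k _ => ?_
    rw [fderiv_cst_mul_cst (p j) (p k)
      (((hAc j k).differentiable (by simp)) (X t))]
  have hBB : ∀ i, grad (fun x => wnorm2 R ((R * (G x)ᵀ) *ᵥ grad (φ t) x)) (X t) i
      = grad (fun x => wnorm2 R ((R * (G x)ᵀ) *ᵥ p)) (X t) i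
        + 2 * (H *ᵥ (A (X t) *ᵥ p)) i := by
    intro i
    rw [hgradfull i, hgradfrz i]
    have hmv : (H *ᵥ (A (X t) *ᵥ p)) i = ∑ j, ∑ k, H i j * (A (X t) j k * p k) := by
      rw [show (H *ᵥ (A (X t) *ᵥ p)) i = ∑ j, H i j * (A (X t) *ᵥ p) j from rfl]
      exact Finset.sum_congr rfl fun j _ => by
        rw [show (A (X t) *ᵥ p) j = ∑ k, A (X t) j k * p k from rfl, Finset.mul_sum]
    rw [hmv]
    rw [show (∑ j, ∑ k, (p j * (A (X t) j k * H i k + p k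
            * fderiv ℝ (fun x => A x j k) (X t) (Pi.single i 1))
          + (A (X t) j k * p k) * H i j))
        = (∑ j, ∑ k, p j * (p k * fderiv ℝ (fun x => A x j k) (X t) (Pi.single i 1)))
          + ((∑ j, ∑ k, p j * (A (X t) j k * H i k))
            + (∑ j, ∑ k, (A (X t) j k * p k) * H i j)) from by
      rw [← Finset.sum_add_distrib, ← Finset.sum_add_distrib]
      refine Finset.sum_congr rfl fun j _ => ?_
      rw [← Finset.sum_add_distrib, ← Finset.sum_add_distrib]
      exact Finset.sum_congr rfl fun k _ => by ring]
    have h1 : (∑ j, ∑ k, p j * (A (X t) j k * H i k))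
        = ∑ j, ∑ k, H i j * (A (X t) j k * p k) := by
      rw [Finset.sum_comm]
      exact Finset.sum_congr rfl fun a _ => Finset.sum_congr rfl fun e_ _ => by
        rw [hAs e_ a]; ring
    have h2 : (∑ j, ∑ k, (A (X t) j k * p k) * H i j)
        = ∑ j, ∑ k, H i j * (A (X t) j k * p k) := by
      exact Finset.sum_congr rfl fun a _ => Finset.sum_congr rfl fun e_ _ => by ring
    rw [h1, h2]
    ring
  -- final assembly
  funext i
  have hgoal := hDt i
  have hBBi := hBB i
  simp only [Pi.add_apply, Pi.sub_apply, Pi.smul_apply, smul_eq_mul]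
  rw [hgoal, hconstr, hBBi]
  have hXdexp : (H *ᵥ Xd) i
      = (H *ᵥ b (X t)) i - (H *ᵥ (A (X t) *ᵥ p)) i - (H *ᵥ β t) i := by
    rw [hXddef, Matrix.mulVec_sub, Matrix.mulVec_sub]
    simp
  have hPdexp : Pd i = -(((jac b (X t))ᵀ *ᵥ p) i
      - (1/2 : ℝ) * grad (fun x => wnorm2 R ((R * (G x)ᵀ) *ᵥ p)) (X t) i
      + grad c (X t) i + (H *ᵥ β t) i
      + (1/2 : ℝ) * grad (fun x => frob Sig (hess (φ t) x)) (X t) i) := by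
    rw [hPddef]
    simp only [Pi.neg_apply, Pi.add_apply, Pi.sub_apply, Pi.smul_apply, smul_eq_mul]
  rw [hXdexp, hPdexp]
  ring
end
end

section
/- Suppose Σ = 0 (deterministic dynamics). Let v : [0,T] × ℝ^d → ℝ be smooth and satisfy −∂_t v(t,x) = b(x)·∇_x v(t,x) + c(x) − ½ ‖R G(x)ᵀ ∇_x v(t,x)‖_R² for all (t,x), with terminal condition v(T,·) = f. Let X : [0,T] → ℝ^d be differentiable with X_0 = a and Ẋ_t = b(X_t) − G(X_t) R G(X_t)ᵀ ∇_x v(t, X_t). Then P_t := ∇_x v(t, X_t) satisfies the adjoint equation −Ṗ_t = (Db(X_t))ᵀ P_t − ½ ∇_x[‖R G(x)ᵀ P_t‖_R²]_{x=X_t} (gradient taken with P_t frozen) + ∇c(X_t) for all t ∈ [0,T], together with the boundary conditions X_0 = a and P_T = ∇f(X_T); i.e., (X_t, P_t) solves the classical Pontryagin minimum principle system with open-loop control U_t = −R G(X_t)ᵀ P_t. -/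
open Matrix Set

noncomputable section

/-- Derivative of a dot product of two curves of vectors. -/
lemma hasDerivAt_dot {n : ℕ} {u w : ℝ → Fin n → ℝ} {u' w' : Fin n → ℝ} {s : ℝ}
    (hu : ∀ j, HasDerivAt (fun r => u r j) (u' j) s)
    (hw : ∀ j, HasDerivAt (fun r => w r j) (w' j) s) :
    HasDerivAt (fun r => u r ⬝ᵥ w r) (u' ⬝ᵥ w s + u s ⬝ᵥ w') s := by
  have h := HasDerivAt.sum (u := Finset.univ)
    (A := fun j r => u r j * w r j)
    (A' := fun j => u' j * w s j + u s j * w' j)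
    (fun j _ => (hu j).mul (hw j))
  have heq : (fun r => u r ⬝ᵥ w r) = fun y => ∑ j, u y j * w y j := by
    funext y; simp [dotProduct]
  rw [heq]
  rw [Finset.sum_fn] at h
  refine h.congr_deriv ?_
  simp [dotProduct, Finset.sum_add_distrib]

/-- Smoothness of a dot product. -/
lemma contDiff_dot {n m : ℕ} {u w : (Fin n → ℝ) → Fin m → ℝ}
    (hu : ∀ j, ContDiff ℝ (⊤ : ℕ∞) fun x => u x j)
    (hw : ∀ j, ContDiff ℝ (⊤ : ℕ∞) fun x => w x j) :
    ContDiff ℝ (⊤ : ℕ∞) fun x => u x ⬝ᵥ w x := by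
  have heq : (fun x => u x ⬝ᵥ w x) = fun x => ∑ j, u x j * w x j := by
    funext x; simp [dotProduct]
  rw [heq]
  exact ContDiff.sum fun j _ => (hu j).mul (hw j)

/-- deterministic case `Σ = 0`.  If `v` solves the HJB equation
`−∂ₜv = b·∇ₓv + c − ½‖RG(x)ᵀ∇ₓv‖_R²` on `[0,T] × ℝ^d` with `v(T,·) = f`, and `X`
solves the closed-loop ODE `Ẋₜ = b(Xₜ) − G(Xₜ)RG(Xₜ)ᵀ∇ₓv(t,Xₜ)` with `X₀ = a`, then
`Pₜ := ∇ₓv(t,Xₜ)` satisfies the adjoint equation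
`−Ṗₜ = (Db(Xₜ))ᵀPₜ − ½∇ₓ[‖RG(x)ᵀPₜ‖_R²]_{x=Xₜ} + ∇c(Xₜ)` together with the boundary
conditions `X₀ = a` and `P_T = ∇f(X_T)`; i.e. `(Xₜ, Pₜ)` solves the classical
Pontryagin system with open-loop control `Uₜ = −RG(Xₜ)ᵀPₜ`. -/
theorem stmt7 {d du : ℕ} (T : ℝ) (hT : 0 < T)
    (R : Matrix (Fin du) (Fin du) ℝ) (hRsymm : R.IsSymm) (hRpd : R.PosDef)
    (b : (Fin d → ℝ) → (Fin d → ℝ)) (hb : ContDiff ℝ (⊤ : ℕ∞) b)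
    (G : (Fin d → ℝ) → Matrix (Fin d) (Fin du) ℝ)
    (hG : ∀ i j, ContDiff ℝ (⊤ : ℕ∞) fun x => G x i j)
    (c : (Fin d → ℝ) → ℝ) (hc : ContDiff ℝ (⊤ : ℕ∞) c)
    (f : (Fin d → ℝ) → ℝ) (hf : ContDiff ℝ (⊤ : ℕ∞) f)
    (v : ℝ → (Fin d → ℝ) → ℝ)
    (hv : ContDiff ℝ (⊤ : ℕ∞) fun q : ℝ × (Fin d → ℝ) => v q.1 q.2)
    -- HJB equation with Σ = 0 on [0,T] × ℝ^d
    (hHJB : ∀ t ∈ Icc (0 : ℝ) T, ∀ x : Fin d → ℝ,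
      -derivWithin (fun s => v s x) (Icc (0 : ℝ) T) t
        = b x ⬝ᵥ grad (v t) x + c x
          - (1/2) * wnorm2 R ((R * (G x)ᵀ) *ᵥ grad (v t) x))
    -- terminal condition v(T,·) = f
    (hterm : ∀ x, v T x = f x)
    (a : Fin d → ℝ)
    (X : ℝ → (Fin d → ℝ)) (hX0 : X 0 = a)
    -- closed-loop ODE for X
    (hX : ∀ t ∈ Icc (0 : ℝ) T, HasDerivWithinAt X
      (b (X t) - (G (X t) * R * (G (X t))ᵀ) *ᵥ grad (v t) (X t)) (Icc (0 : ℝ) T) t)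
    -- P_t := ∇ₓ v(t, X_t)
    (P : ℝ → (Fin d → ℝ)) (hP : ∀ t, P t = grad (v t) (X t)) :
    (∀ t ∈ Icc (0 : ℝ) T, HasDerivWithinAt P
      (-((jac b (X t))ᵀ *ᵥ P t
          - (1/2 : ℝ) • grad (fun x => wnorm2 R ((R * (G x)ᵀ) *ᵥ P t)) (X t)
          + grad c (X t))) (Icc (0 : ℝ) T) t) ∧
    X 0 = a ∧ P T = grad f (X T) := by
  have hle : ((⊤ : ℕ∞) : WithTop ℕ∞) ≠ 0 := by simp
  set W : ℝ × (Fin d → ℝ) → ℝ := fun q => v q.1 q.2 with hWdef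
  have hWdiff : Differentiable ℝ W := hv.differentiable hle
  set A : ℝ × (Fin d → ℝ) → (ℝ × (Fin d → ℝ)) →L[ℝ] ℝ := fderiv ℝ W with hAdef
  have hA : ContDiff ℝ (⊤ : ℕ∞) A := hv.fderiv_right (by exact_mod_cast le_top)
  set B := fderiv ℝ A with hBdef
  have hWf : ∀ q, HasFDerivAt W (A q) q := fun q => (hWdiff q).hasFDerivAt
  have hAf : ∀ q, HasFDerivAt A (B q) q := fun q => ((hA.differentiable hle) q).hasFDerivAt
  have hsym : ∀ q u' w', B q u' w' = B q w' u' := fun q u' w' =>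
    second_derivative_symmetric hWf (hAf q) u' w'
  -- gradient in terms of A
  have hgt : ∀ (t : ℝ) (x : Fin d → ℝ),
      grad (v t) x = fun j => A (t, x) ((0 : ℝ), Pi.single j 1) := by
    intro t x
    have h1 : HasFDerivAt (fun y : Fin d → ℝ => ((t : ℝ), y))
        ((0 : (Fin d → ℝ) →L[ℝ] ℝ).prod (ContinuousLinearMap.id ℝ _)) x :=
      (hasFDerivAt_const t x).prodMk (hasFDerivAt_id x)
    have h2 : HasFDerivAt (v t)
        ((A (t, x)).comp ((0 : (Fin d → ℝ) →L[ℝ] ℝ).prod (ContinuousLinearMap.id ℝ _))) x :=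
      (hWf (t, x)).comp x h1
    funext j
    simp [grad, h2.fderiv]
  -- time derivative in terms of A
  have htime : ∀ (t : ℝ) (x : Fin d → ℝ),
      HasDerivAt (fun s => v s x) (A (t, x) ((1 : ℝ), (0 : Fin d → ℝ))) t := by
    intro t x
    have h1 : HasDerivAt (fun s : ℝ => (s, x)) ((1 : ℝ), (0 : Fin d → ℝ)) t :=
      (hasDerivAt_id t).prodMk (hasDerivAt_const t x)
    exact (hWf (t, x)).comp_hasDerivAt t h1
  -- rewritten HJB
  have hHJB' : ∀ t ∈ Icc (0 : ℝ) T, ∀ x : Fin d → ℝ,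
      -(A (t, x) ((1 : ℝ), (0 : Fin d → ℝ)))
        = b x ⬝ᵥ (fun j => A (t, x) ((0 : ℝ), Pi.single j 1)) + c x
          - (1/2) * (((R * (G x)ᵀ) *ᵥ fun j => A (t, x) ((0 : ℝ), Pi.single j 1)) ⬝ᵥ
              (R⁻¹ *ᵥ ((R * (G x)ᵀ) *ᵥ fun j => A (t, x) ((0 : ℝ), Pi.single j 1)))) := by
    intro t ht x
    have h := hHJB t ht x
    rw [(htime t x).hasDerivWithinAt.derivWithin ((uniqueDiffOn_Icc hT) t ht), hgt t x] at h
    simpa [wnorm2] using h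
  -- matrix entry smoothness
  have hMsmooth : ∀ (k : Fin du) (l : Fin d), ContDiff ℝ (⊤ : ℕ∞) fun x => (R * (G x)ᵀ) k l := by
    intro k l
    have heq : (fun x => (R * (G x)ᵀ) k l) = fun x => ∑ m, R k m * G x l m := by
      funext x; simp [Matrix.mul_apply]
    rw [heq]
    exact ContDiff.sum fun m _ => contDiff_const.mul (hG l m)
  -- R inverse facts
  have hRinv : R⁻¹ * R = 1 := Matrix.nonsing_inv_mul R (isUnit_iff_ne_zero.2 hRpd.det_pos.ne')
  have hRinvT : R⁻¹ᵀ = R⁻¹ := by rw [Matrix.transpose_nonsing_inv, hRsymm]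
  have hdotsymm : ∀ (a₁ b₁ : Fin du → ℝ), a₁ ⬝ᵥ (R⁻¹ *ᵥ b₁) = b₁ ⬝ᵥ (R⁻¹ *ᵥ a₁) := by
    intro a₁ b₁
    rw [Matrix.dotProduct_mulVec, ← Matrix.mulVec_transpose, hRinvT, dotProduct_comm]
  refine ⟨?_, hX0, ?_⟩
  · -- main adjoint equation
    intro t ht
    rw [hasDerivWithinAt_pi]
    intro i
    set x0 : Fin d → ℝ := X t with hx0def
    set e : Fin d → ℝ := Pi.single i (1 : ℝ) with he
    set g0 : Fin d → ℝ := fun j => A (t, x0) ((0 : ℝ), Pi.single j 1) with hg0def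
    have hPt : P t = g0 := by rw [hP t, hgt t x0]
    set M0 : Matrix (Fin du) (Fin d) ℝ := R * (G x0)ᵀ with hM0def
    set u0 : Fin du → ℝ := M0 *ᵥ g0 with hu0def
    set H : Fin d → ℝ := fun j => B (t, x0) ((0 : ℝ), e) ((0 : ℝ), Pi.single j 1) with hHdef
    set M' : Matrix (Fin du) (Fin d) ℝ :=
      fun k l => fderiv ℝ (fun x => (R * (G x)ᵀ) k l) x0 e with hM'def
    set Xd : Fin d → ℝ := b x0 - (G x0 * R * (G x0)ᵀ) *ᵥ g0 with hXddef
    -- derivative of P via chain rule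
    have hder : HasDerivWithinAt (fun s => P s i)
        (B (t, x0) ((1 : ℝ), Xd) ((0 : ℝ), Pi.single i 1)) (Icc 0 T) t := by
      have h0 : HasDerivWithinAt X Xd (Icc 0 T) t := by
        have := hX t ht
        rwa [hgt t (X t)] at this
      have h1 : HasDerivWithinAt (fun s : ℝ => (s, X s)) ((1 : ℝ), Xd) (Icc 0 T) t :=
        (hasDerivWithinAt_id t _).prodMk h0
      have h2 : HasDerivWithinAt (fun s => A (s, X s)) (B (t, x0) ((1 : ℝ), Xd)) (Icc 0 T) t :=
        (hAf (t, x0)).comp_hasDerivWithinAt t h1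
      have h3 := h2.clm_apply (hasDerivWithinAt_const t _ ((0 : ℝ), Pi.single i (1 : ℝ)))
      have h4 : (fun s => P s i) = fun s => A (s, X s) ((0 : ℝ), Pi.single i 1) := by
        funext s; rw [hP s, hgt s (X s)]
      rw [h4]
      simpa using h3
    -- the line γ in direction e
    set γ : ℝ → (Fin d → ℝ) := fun s => x0 + s • e with hγdef
    have hγ0 : γ 0 = x0 := by simp [hγdef]
    have hγd : HasDerivAt γ e 0 := by
      have h := ((hasDerivAt_id (0 : ℝ)).smul_const e).const_add x0
      simpa [hγdef] using h
    have key : ∀ F : (Fin d → ℝ) → ℝ, Differentiable ℝ F →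
        HasDerivAt (fun s => F (γ s)) (fderiv ℝ F x0 e) 0 := by
      intro F hF
      have h1 : HasFDerivAt F (fderiv ℝ F x0) (γ 0) := by
        rw [hγ0]; exact (hF x0).hasFDerivAt
      exact h1.comp_hasDerivAt 0 hγd
    -- chain through A along γ
    have hAγ : HasDerivAt (fun s => A (t, γ s)) (B (t, x0) ((0 : ℝ), e)) 0 := by
      have h1 : HasDerivAt (fun s : ℝ => ((t : ℝ), γ s)) ((0 : ℝ), e) 0 :=
        (hasDerivAt_const 0 t).prodMk hγd
      have h2 : HasFDerivAt A (B (t, x0)) ((t : ℝ), γ 0) := by rw [hγ0]; exact hAf (t, x0)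
      exact h2.comp_hasDerivAt 0 h1
    have hgγ : ∀ j, HasDerivAt (fun s => A (t, γ s) ((0 : ℝ), Pi.single j 1)) (H j) 0 := by
      intro j
      have h := hAγ.clm_apply (hasDerivAt_const 0 ((0 : ℝ), Pi.single j (1 : ℝ)))
      simpa [hγ0, hHdef] using h
    have hLHSγ : HasDerivAt (fun s => -(A (t, γ s) ((1 : ℝ), (0 : Fin d → ℝ))))
        (-(B (t, x0) ((0 : ℝ), e) ((1 : ℝ), (0 : Fin d → ℝ)))) 0 := by
      have h := (hAγ.clm_apply (hasDerivAt_const 0 ((1 : ℝ), (0 : Fin d → ℝ)))).neg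
      simp only [hγ0, map_zero, add_zero] at h
      exact h
    have hbγ : ∀ j, HasDerivAt (fun s => b (γ s) j) (jac b x0 j i) 0 := by
      intro j
      have h := key (fun x => b x j) ((contDiff_pi.1 hb j).differentiable hle)
      simpa [jac, he] using h
    have hcγ : HasDerivAt (fun s => c (γ s)) (grad c x0 i) 0 := by
      have h := key c (hc.differentiable hle)
      simpa [grad, he] using h
    have hMγ : ∀ k l, HasDerivAt (fun s => (R * (G (γ s))ᵀ) k l) (M' k l) 0 :=
      fun k l => key _ ((hMsmooth k l).differentiable hle)
    -- moving u vector
    have huγ : ∀ k, HasDerivAt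
        (fun s => ((R * (G (γ s))ᵀ) *ᵥ fun j => A (t, γ s) ((0 : ℝ), Pi.single j 1)) k)
        ((M' *ᵥ g0 + M0 *ᵥ H) k) 0 := by
      intro k
      have h := hasDerivAt_dot (u := fun s l => (R * (G (γ s))ᵀ) k l)
        (w := fun s j => A (t, γ s) ((0 : ℝ), Pi.single j 1))
        (u' := fun l => M' k l) (w' := H) (hMγ k) hgγ
      have heq : (fun s => ((R * (G (γ s))ᵀ) *ᵥ fun j => A (t, γ s) ((0 : ℝ), Pi.single j 1)) k)
          = fun s => (fun l => (R * (G (γ s))ᵀ) k l) ⬝ᵥ fun j => A (t, γ s) ((0 : ℝ), Pi.single j 1) := by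
        funext s; simp [Matrix.mulVec]
      rw [heq]
      convert h using 1
      simp [Matrix.mulVec, hγ0, hg0def, hM0def]
    have hRuγ : ∀ k, HasDerivAt
        (fun s => (R⁻¹ *ᵥ ((R * (G (γ s))ᵀ) *ᵥ fun j => A (t, γ s) ((0 : ℝ), Pi.single j 1))) k)
        ((R⁻¹ *ᵥ (M' *ᵥ g0 + M0 *ᵥ H)) k) 0 := by
      intro k
      have h := hasDerivAt_dot (u := fun _ l => R⁻¹ k l)
        (w := fun s => (R * (G (γ s))ᵀ) *ᵥ fun j => A (t, γ s) ((0 : ℝ), Pi.single j 1))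
        (u' := 0) (w' := M' *ᵥ g0 + M0 *ᵥ H) (fun l => hasDerivAt_const 0 _) huγ
      have heq : (fun s => (R⁻¹ *ᵥ ((R * (G (γ s))ᵀ) *ᵥ fun j => A (t, γ s) ((0 : ℝ), Pi.single j 1))) k)
          = fun s => (fun l => R⁻¹ k l) ⬝ᵥ ((R * (G (γ s))ᵀ) *ᵥ fun j => A (t, γ s) ((0 : ℝ), Pi.single j 1)) := by
        funext s; simp [Matrix.mulVec]
      rw [heq]
      convert h using 1
      simp [Matrix.mulVec]
    have hQγ : HasDerivAt
        (fun s => ((R * (G (γ s))ᵀ) *ᵥ fun j => A (t, γ s) ((0 : ℝ), Pi.single j 1)) ⬝ᵥ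
          (R⁻¹ *ᵥ ((R * (G (γ s))ᵀ) *ᵥ fun j => A (t, γ s) ((0 : ℝ), Pi.single j 1))))
        ((M' *ᵥ g0 + M0 *ᵥ H) ⬝ᵥ (R⁻¹ *ᵥ u0) + u0 ⬝ᵥ (R⁻¹ *ᵥ (M' *ᵥ g0 + M0 *ᵥ H))) 0 := by
      have h := hasDerivAt_dot huγ hRuγ
      convert h using 2 <;> simp [hγ0, hg0def, hM0def, hu0def]
    -- the full RHS of HJB along γ
    have hRHSγ : HasDerivAt
        (fun s => b (γ s) ⬝ᵥ (fun j => A (t, γ s) ((0 : ℝ), Pi.single j 1)) + c (γ s)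
          - (1/2) * (((R * (G (γ s))ᵀ) *ᵥ fun j => A (t, γ s) ((0 : ℝ), Pi.single j 1)) ⬝ᵥ
              (R⁻¹ *ᵥ ((R * (G (γ s))ᵀ) *ᵥ fun j => A (t, γ s) ((0 : ℝ), Pi.single j 1)))))
        (((fun j => jac b x0 j i) ⬝ᵥ g0 + b x0 ⬝ᵥ H) + grad c x0 i
          - (1/2) * ((M' *ᵥ g0 + M0 *ᵥ H) ⬝ᵥ (R⁻¹ *ᵥ u0) + u0 ⬝ᵥ (R⁻¹ *ᵥ (M' *ᵥ g0 + M0 *ᵥ H)))) 0 := by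
      have hdotb := hasDerivAt_dot (u := fun s => b (γ s))
        (w := fun s j => A (t, γ s) ((0 : ℝ), Pi.single j 1))
        (u' := fun j => jac b x0 j i) (w' := H) hbγ hgγ
      have hdotb' : HasDerivAt (fun s => b (γ s) ⬝ᵥ fun j => A (t, γ s) ((0 : ℝ), Pi.single j 1))
          ((fun j => jac b x0 j i) ⬝ᵥ g0 + b x0 ⬝ᵥ H) 0 := by
        convert hdotb using 2 <;> simp [hγ0, hg0def]
      exact (hdotb'.add hcγ).sub (hQγ.const_mul (1/2))
    -- differentiate HJB in direction e
    have hHJBdir : -(B (t, x0) ((0 : ℝ), e) ((1 : ℝ), (0 : Fin d → ℝ)))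
        = ((fun j => jac b x0 j i) ⬝ᵥ g0 + b x0 ⬝ᵥ H) + grad c x0 i
          - (1/2) * ((M' *ᵥ g0 + M0 *ᵥ H) ⬝ᵥ (R⁻¹ *ᵥ u0) + u0 ⬝ᵥ (R⁻¹ *ᵥ (M' *ᵥ g0 + M0 *ᵥ H))) := by
      have hfun : (fun s => -(A (t, γ s) ((1 : ℝ), (0 : Fin d → ℝ))))
          = fun s => b (γ s) ⬝ᵥ (fun j => A (t, γ s) ((0 : ℝ), Pi.single j 1)) + c (γ s)
          - (1/2) * (((R * (G (γ s))ᵀ) *ᵥ fun j => A (t, γ s) ((0 : ℝ), Pi.single j 1)) ⬝ᵥ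
              (R⁻¹ *ᵥ ((R * (G (γ s))ᵀ) *ᵥ fun j => A (t, γ s) ((0 : ℝ), Pi.single j 1)))) := by
        funext s
        exact hHJB' t ht (γ s)
      have hLHS' : HasDerivAt
          (fun s => b (γ s) ⬝ᵥ (fun j => A (t, γ s) ((0 : ℝ), Pi.single j 1)) + c (γ s)
          - (1/2) * (((R * (G (γ s))ᵀ) *ᵥ fun j => A (t, γ s) ((0 : ℝ), Pi.single j 1)) ⬝ᵥ
              (R⁻¹ *ᵥ ((R * (G (γ s))ᵀ) *ᵥ fun j => A (t, γ s) ((0 : ℝ), Pi.single j 1)))))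
          (-(B (t, x0) ((0 : ℝ), e) ((1 : ℝ), (0 : Fin d → ℝ)))) 0 := by
        rw [← hfun]; exact hLHSγ
      exact hLHS'.unique hRHSγ
    -- frozen gradient term
    have husm : ∀ k, ContDiff ℝ (⊤ : ℕ∞) fun x => ((R * (G x)ᵀ) *ᵥ P t) k := by
      intro k
      have heq : (fun x => ((R * (G x)ᵀ) *ᵥ P t) k) = fun x => ∑ l, (R * (G x)ᵀ) k l * P t l := by
        funext x; simp [Matrix.mulVec, dotProduct]
      rw [heq]
      exact ContDiff.sum fun l _ => (hMsmooth k l).mul contDiff_const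
    have hFsm : ContDiff ℝ (⊤ : ℕ∞) fun x => ((R * (G x)ᵀ) *ᵥ P t) ⬝ᵥ (R⁻¹ *ᵥ ((R * (G x)ᵀ) *ᵥ P t)) := by
      apply contDiff_dot husm
      intro k
      have heq : (fun x => (R⁻¹ *ᵥ ((R * (G x)ᵀ) *ᵥ P t)) k)
          = fun x => ∑ m, R⁻¹ k m * ((R * (G x)ᵀ) *ᵥ P t) m := by
        funext x; simp [Matrix.mulVec, dotProduct]
      rw [heq]
      exact ContDiff.sum fun m _ => contDiff_const.mul (husm m)
    have hufγ : ∀ k, HasDerivAt (fun s => ((R * (G (γ s))ᵀ) *ᵥ P t) k) ((M' *ᵥ g0) k) 0 := by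
      intro k
      have h := hasDerivAt_dot (u := fun s l => (R * (G (γ s))ᵀ) k l)
        (w := fun _ => P t) (u' := fun l => M' k l) (w' := 0)
        (hMγ k) (fun j => hasDerivAt_const 0 _)
      have heq : (fun s => ((R * (G (γ s))ᵀ) *ᵥ P t) k)
          = fun s => (fun l => (R * (G (γ s))ᵀ) k l) ⬝ᵥ P t := by
        funext s; simp [Matrix.mulVec]
      rw [heq]
      convert h using 1
      simp [Matrix.mulVec, hPt]
    have hRufγ : ∀ k, HasDerivAt (fun s => (R⁻¹ *ᵥ ((R * (G (γ s))ᵀ) *ᵥ P t)) k)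
        ((R⁻¹ *ᵥ (M' *ᵥ g0)) k) 0 := by
      intro k
      have h := hasDerivAt_dot (u := fun _ l => R⁻¹ k l)
        (w := fun s => (R * (G (γ s))ᵀ) *ᵥ P t)
        (u' := 0) (w' := M' *ᵥ g0) (fun l => hasDerivAt_const 0 _) hufγ
      have heq : (fun s => (R⁻¹ *ᵥ ((R * (G (γ s))ᵀ) *ᵥ P t)) k)
          = fun s => (fun l => R⁻¹ k l) ⬝ᵥ ((R * (G (γ s))ᵀ) *ᵥ P t) := by
        funext s; simp [Matrix.mulVec]
      rw [heq]
      convert h using 1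
      simp [Matrix.mulVec]
    have hQfγ : HasDerivAt (fun s => ((R * (G (γ s))ᵀ) *ᵥ P t) ⬝ᵥ (R⁻¹ *ᵥ ((R * (G (γ s))ᵀ) *ᵥ P t)))
        ((M' *ᵥ g0) ⬝ᵥ (R⁻¹ *ᵥ u0) + u0 ⬝ᵥ (R⁻¹ *ᵥ (M' *ᵥ g0))) 0 := by
      have h := hasDerivAt_dot hufγ hRufγ
      convert h using 2 <;> simp [hγ0, hPt, hu0def, hM0def]
    have hgradF : grad (fun x => wnorm2 R ((R * (G x)ᵀ) *ᵥ P t)) x0 i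
        = (M' *ᵥ g0) ⬝ᵥ (R⁻¹ *ᵥ u0) + u0 ⬝ᵥ (R⁻¹ *ᵥ (M' *ᵥ g0)) := by
      have h1 := key (fun x => ((R * (G x)ᵀ) *ᵥ P t) ⬝ᵥ (R⁻¹ *ᵥ ((R * (G x)ᵀ) *ᵥ P t)))
        (hFsm.differentiable hle)
      have h2 := h1.unique hQfγ
      have h3 : grad (fun x => wnorm2 R ((R * (G x)ᵀ) *ᵥ P t)) x0 i
          = fderiv ℝ (fun x => ((R * (G x)ᵀ) *ᵥ P t) ⬝ᵥ (R⁻¹ *ᵥ ((R * (G x)ᵀ) *ᵥ P t))) x0 e := by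
        simp [grad, wnorm2, he]
      rw [h3, h2]
    -- split B (1, Xd) (0, e) by symmetry and linearity
    have hXdsum : Xd = ∑ j, Xd j • (Pi.single j (1 : ℝ) : Fin d → ℝ) := by
      funext k
      simp [Finset.sum_apply, Pi.single_apply]
    have hsplit : B (t, x0) ((1 : ℝ), Xd) ((0 : ℝ), Pi.single i 1)
        = B (t, x0) ((0 : ℝ), e) ((1 : ℝ), (0 : Fin d → ℝ)) + Xd ⬝ᵥ H := by
      rw [show ((0 : ℝ), Pi.single i (1 : ℝ)) = ((0 : ℝ), e) by rw [he]]
      rw [hsym]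
      have hadd : ((1 : ℝ), Xd) = ((1 : ℝ), (0 : Fin d → ℝ)) + ((0 : ℝ), Xd) := by simp
      rw [hadd, map_add]
      congr 1
      have h0Xd : ((0 : ℝ), Xd) = ∑ j, Xd j • (((0 : ℝ), Pi.single j (1 : ℝ)) : ℝ × (Fin d → ℝ)) := by
        apply Prod.ext
        · simp [Prod.fst_sum, Prod.smul_mk, smul_zero]
        · simp only [Prod.snd_sum, Prod.smul_mk]
          exact hXdsum
      rw [h0Xd, map_sum]
      simp only [_root_.map_smul]
      simp [dotProduct, hHdef, smul_eq_mul]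
    -- matrix identity: the Hessian correction terms
    have hclaim2 : u0 ⬝ᵥ (R⁻¹ *ᵥ (M0 *ᵥ H)) = ((G x0 * R * (G x0)ᵀ) *ᵥ g0) ⬝ᵥ H := by
      rw [hu0def, hM0def, Matrix.mulVec_mulVec]
      have h1 : R⁻¹ * (R * (G x0)ᵀ) = (G x0)ᵀ := by
        rw [← Matrix.mul_assoc, hRinv, Matrix.one_mul]
      rw [h1, Matrix.dotProduct_mulVec _ (G x0)ᵀ H]
      congr 1
      rw [Matrix.vecMul_transpose, Matrix.mulVec_mulVec, ← Matrix.mul_assoc]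
    have hclaim1 : (M0 *ᵥ H) ⬝ᵥ (R⁻¹ *ᵥ u0) = u0 ⬝ᵥ (R⁻¹ *ᵥ (M0 *ᵥ H)) := hdotsymm _ _
    -- expand the bilinear terms
    have hexp1 : (M' *ᵥ g0 + M0 *ᵥ H) ⬝ᵥ (R⁻¹ *ᵥ u0)
        = (M' *ᵥ g0) ⬝ᵥ (R⁻¹ *ᵥ u0) + (M0 *ᵥ H) ⬝ᵥ (R⁻¹ *ᵥ u0) := add_dotProduct _ _ _
    have hexp2 : u0 ⬝ᵥ (R⁻¹ *ᵥ (M' *ᵥ g0 + M0 *ᵥ H))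
        = u0 ⬝ᵥ (R⁻¹ *ᵥ (M' *ᵥ g0)) + u0 ⬝ᵥ (R⁻¹ *ᵥ (M0 *ᵥ H)) := by
      rw [Matrix.mulVec_add, dotProduct_add]
    -- the velocity dot H
    have hXdH : Xd ⬝ᵥ H = b x0 ⬝ᵥ H - ((G x0 * R * (G x0)ᵀ) *ᵥ g0) ⬝ᵥ H := by
      rw [hXddef, sub_dotProduct]
    -- target expansion
    have htarget : (-((jac b x0)ᵀ *ᵥ P t
          - (1/2 : ℝ) • grad (fun x => wnorm2 R ((R * (G x)ᵀ) *ᵥ P t)) x0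
          + grad c x0)) i
        = -((fun j => jac b x0 j i) ⬝ᵥ g0)
          + (1/2) * ((M' *ᵥ g0) ⬝ᵥ (R⁻¹ *ᵥ u0) + u0 ⬝ᵥ (R⁻¹ *ᵥ (M' *ᵥ g0)))
          - grad c x0 i := by
      have h1 : ((jac b x0)ᵀ *ᵥ P t) i = (fun j => jac b x0 j i) ⬝ᵥ g0 := by
        rw [hPt]
        simp [Matrix.mulVec, dotProduct, Matrix.transpose_apply]
      simp only [Pi.neg_apply, Pi.add_apply, Pi.sub_apply, Pi.smul_apply, smul_eq_mul]
      rw [h1, hgradF]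
      ring
    -- final assembly
    have hfinal : B (t, x0) ((1 : ℝ), Xd) ((0 : ℝ), Pi.single i 1)
        = (-((jac b x0)ᵀ *ᵥ P t
          - (1/2 : ℝ) • grad (fun x => wnorm2 R ((R * (G x)ᵀ) *ᵥ P t)) x0
          + grad c x0)) i := by
      rw [hsplit, htarget]
      have hB : B (t, x0) ((0 : ℝ), e) ((1 : ℝ), (0 : Fin d → ℝ))
          = -(((fun j => jac b x0 j i) ⬝ᵥ g0 + b x0 ⬝ᵥ H) + grad c x0 i
          - (1/2) * ((M' *ᵥ g0 + M0 *ᵥ H) ⬝ᵥ (R⁻¹ *ᵥ u0) + u0 ⬝ᵥ (R⁻¹ *ᵥ (M' *ᵥ g0 + M0 *ᵥ H)))) := by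
        rw [← hHJBdir]; ring
      rw [hB, hXdH, hexp1, hexp2] at *
      rw [hclaim1, hclaim2]
      ring
    rw [← hfinal]
    exact hder
  · -- terminal condition
    have hvT : v T = f := funext hterm
    rw [hP T, hvT]
end
end
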